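/- arXiv:2410.22899 — 2 statements merged into one kernel-verified Lean document; each statement's English description precedes it below -/
import Mathlib

section
/- Let Y be a length metric space, Y' ⊆ Y a closed subset with topological boundary B (relative to Y), and P, Q ∈ Y'. If every minimizing geodesic in Y from P to Q that leaves Y' must cross B, and d_{Y'}(P,Q) ≤ d_{Y'}(P,B) + d_{Y'}(Q,B), where d_{Y'}(x,B) = inf_{b∈B} d_{Y'}(x,b), then d_{Y'}(P,Q) = d_Y(P,Q). -/
open Set ENNReal

/-- Intrinsic (length) distance inside a subset `S` of a metric space. -/
noncomputable def intrinsicDist {Y : Type*} [PseudoEMetricSpace Y] (S : Set Y) (P Q : Y) :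
    ℝ≥0∞ :=
  ⨅ (γ : ℝ → Y) (_ : ContinuousOn γ (Set.Icc 0 1) ∧ Set.MapsTo γ (Set.Icc 0 1) S ∧
      γ 0 = P ∧ γ 1 = Q), eVariationOn γ (Set.Icc 0 1)

theorem intrinsicDist_mono_aux {Y : Type*} [PseudoEMetricSpace Y] {S T : Set Y} (hST : S ⊆ T)
    (P Q : Y) : intrinsicDist T P Q ≤ intrinsicDist S P Q := by
  refine le_iInf fun γ => le_iInf fun h => ?_
  exact iInf₂_le γ ⟨h.1, h.2.1.mono_right hST, h.2.2⟩

/-- criterion `C_T` of Bronstein et al. In a proper geodesic length space `Y`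
with closed `Y' ⊆ Y` of boundary `B`, if every minimizing geodesic from `P` to `Q` that leaves
`Y'` crosses `B`, and `d_{Y'}(P,Q) ≤ d_{Y'}(P,B) + d_{Y'}(Q,B)`, then
`d_{Y'}(P,Q) = d_Y(P,Q)`. -/
theorem criterionT_guarantees {Y : Type*} [MetricSpace Y] [ProperSpace Y]
    (Y' : Set Y) (hY'closed : IsClosed Y') (B : Set Y) (hB : B = frontier Y')
    (hgeodesic : ∀ x y : Y, ∃ γ : ℝ → Y, ContinuousOn γ (Set.Icc 0 1) ∧
      γ 0 = x ∧ γ 1 = y ∧ eVariationOn γ (Set.Icc 0 1) = intrinsicDist (Set.univ : Set Y) x y)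
    (P Q : Y) (hP : P ∈ Y') (hQ : Q ∈ Y')
    (hcross : ∀ γ : ℝ → Y, ContinuousOn γ (Set.Icc 0 1) → γ 0 = P → γ 1 = Q →
      eVariationOn γ (Set.Icc 0 1) = intrinsicDist (Set.univ : Set Y) P Q →
      ¬ Set.MapsTo γ (Set.Icc 0 1) Y' → ∃ t ∈ Set.Icc (0:ℝ) 1, γ t ∈ B)
    (hCT : intrinsicDist Y' P Q ≤
      (⨅ b ∈ B, intrinsicDist Y' P b) + (⨅ b ∈ B, intrinsicDist Y' Q b)) :
    intrinsicDist Y' P Q = intrinsicDist (Set.univ : Set Y) P Q := by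
  refine le_antisymm ?_ (intrinsicDist_mono_aux (subset_univ Y') P Q)
  obtain ⟨γ, hγc, hγ0, hγ1, hγvar⟩ := hgeodesic P Q
  rw [← hγvar]
  by_cases hmaps : Set.MapsTo γ (Set.Icc 0 1) Y'
  · exact iInf₂_le γ ⟨hγc, hmaps, hγ0, hγ1⟩
  -- γ leaves Y'; find first and last exit points
  · set S : Set ℝ := {t ∈ Set.Icc (0:ℝ) 1 | γ t ∉ Y'} with hS
    obtain ⟨t0, ht0I, ht0⟩ : ∃ t ∈ Set.Icc (0:ℝ) 1, γ t ∉ Y' := by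
      by_contra h; push_neg at h; exact hmaps fun t ht => h t ht
    have hSne : S.Nonempty := ⟨t0, ht0I, ht0⟩
    have hSsub : S ⊆ Set.Icc 0 1 := fun t ht => ht.1
    have hSbdd : BddBelow S := ⟨0, fun t ht => ht.1.1⟩
    have hSbddA : BddAbove S := ⟨1, fun t ht => ht.1.2⟩
    set t₁ := sInf S with ht₁
    set t₂ := sSup S with ht₂
    have ht₁I : t₁ ∈ Set.Icc (0:ℝ) 1 :=
      ⟨le_csInf hSne fun t ht => ht.1.1, (csInf_le hSbdd hSne.choose_spec).trans
        (hSsub hSne.choose_spec).2⟩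
    have ht₂I : t₂ ∈ Set.Icc (0:ℝ) 1 :=
      ⟨(hSsub hSne.choose_spec).1.trans (le_csSup hSbddA hSne.choose_spec),
        csSup_le hSne fun t ht => ht.1.2⟩
    have ht₁₂ : t₁ ≤ t₂ := csInf_le_csSup hSne hSbdd hSbddA
    -- γ maps [0, t₁) and (t₂, 1] into Y'
    have hmem1 : ∀ t, 0 ≤ t → t < t₁ → γ t ∈ Y' := by
      intro t h0 h1
      by_contra h
      exact absurd (csInf_le hSbdd ⟨⟨h0, h1.le.trans ht₁I.2⟩, h⟩) (not_le.2 h1)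
    have hmem2 : ∀ t, t₂ < t → t ≤ 1 → γ t ∈ Y' := by
      intro t h2 h1
      by_contra h
      exact absurd (le_csSup hSbddA ⟨⟨ht₂I.1.trans h2.le, h1⟩, h⟩) (not_le.2 h2)
    -- γ t₁ and γ t₂ are in the closure of the complement of Y'
    have hcompl : ∀ t ∈ Set.Icc (0:ℝ) 1, t ∈ closure S → γ t ∈ closure Y'ᶜ := by
      intro t htI htc
      have : ContinuousWithinAt γ S t := (hγc t htI).mono hSsub
      exact closure_mono (image_subset_iff.2 fun u hu => hu.2) (this.mem_closure_image htc)
    have hγt₁c : γ t₁ ∈ closure Y'ᶜ := hcompl t₁ ht₁I (csInf_mem_closure hSne hSbdd)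
    have hγt₂c : γ t₂ ∈ closure Y'ᶜ := hcompl t₂ ht₂I (csSup_mem_closure hSne hSbddA)
    -- γ t₁ ∈ Y'
    have hγt₁Y : γ t₁ ∈ Y' := by
      rcases eq_or_lt_of_le ht₁I.1 with h | h
      · rw [← h]; rwa [hγ0]
      · have hsub : Set.Ico (0:ℝ) t₁ ⊆ Set.Icc 0 1 :=
          fun u hu => ⟨hu.1, hu.2.le.trans ht₁I.2⟩
        have hcw : ContinuousWithinAt γ (Set.Ico 0 t₁) t₁ := (hγc t₁ ht₁I).mono hsub
        have : γ t₁ ∈ closure Y' := by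
          refine closure_mono (image_subset_iff.2 fun u hu => hmem1 u hu.1 hu.2)
            (hcw.mem_closure_image ?_)
          rw [closure_Ico h.ne]; exact ⟨ht₁I.1, le_refl _⟩
        rwa [hY'closed.closure_eq] at this
    have hγt₂Y : γ t₂ ∈ Y' := by
      rcases eq_or_lt_of_le ht₂I.2 with h | h
      · rw [h]; rwa [hγ1]
      · have hsub : Set.Ioc t₂ 1 ⊆ Set.Icc 0 1 :=
          fun u hu => ⟨ht₂I.1.trans hu.1.le, hu.2⟩
        have hcw : ContinuousWithinAt γ (Set.Ioc t₂ 1) t₂ := (hγc t₂ ht₂I).mono hsub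
        have : γ t₂ ∈ closure Y' := by
          refine closure_mono (image_subset_iff.2 fun u hu => hmem2 u hu.1 hu.2)
            (hcw.mem_closure_image ?_)
          rw [closure_Ioc h.ne]; exact ⟨le_refl _, h.le⟩
        rwa [hY'closed.closure_eq] at this
    have hγt₁B : γ t₁ ∈ B := by
      rw [hB, frontier_eq_closure_inter_closure, hY'closed.closure_eq]
      exact ⟨hγt₁Y, hγt₁c⟩
    have hγt₂B : γ t₂ ∈ B := by
      rw [hB, frontier_eq_closure_inter_closure, hY'closed.closure_eq]
      exact ⟨hγt₂Y, hγt₂c⟩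
    -- reparametrized subpaths
    have hmapsTo1 : Set.MapsTo γ (Set.Icc 0 t₁) Y' := by
      intro t ht
      rcases eq_or_lt_of_le ht.2 with h | h
      · rw [h]; exact hγt₁Y
      · exact hmem1 t ht.1 h
    have hmapsTo2 : Set.MapsTo γ (Set.Icc t₂ 1) Y' := by
      intro t ht
      rcases eq_or_lt_of_le ht.1 with h | h
      · rw [← h]; exact hγt₂Y
      · exact hmem2 t h ht.2
    -- P side path
    have hkey1 : (⨅ b ∈ B, intrinsicDist Y' P b) ≤ eVariationOn γ (Set.Icc 0 t₁) := by
      refine le_trans (iInf₂_le (γ t₁) hγt₁B) ?_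
      set φ : ℝ → ℝ := fun s => t₁ * s with hφ
      have himg : φ '' Set.Icc 0 1 = Set.Icc 0 t₁ := by
        rw [hφ]
        have := Set.image_mul_left_Icc ht₁I.1 (zero_le_one (α := ℝ))
        simpa using this
      have hmono : MonotoneOn φ (Set.Icc 0 1) :=
        fun a _ b _ hab => mul_le_mul_of_nonneg_left hab ht₁I.1
      have hvar : eVariationOn (γ ∘ φ) (Set.Icc 0 1) = eVariationOn γ (Set.Icc 0 t₁) := by
        rw [eVariationOn.comp_eq_of_monotoneOn γ φ hmono, himg]
      rw [← hvar]
      refine iInf₂_le (γ ∘ φ) ⟨?_, ?_, ?_, ?_⟩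
      · have hc : Continuous φ := by fun_prop
        have hm : Set.MapsTo φ (Set.Icc 0 1) (Set.Icc 0 1) := fun s hs =>
          (Set.Icc_subset_Icc_right ht₁I.2) (himg ▸ Set.mem_image_of_mem φ hs)
        exact hγc.comp hc.continuousOn hm
      · exact fun s hs => hmapsTo1 (himg ▸ Set.mem_image_of_mem φ hs)
      · simp [hφ, hγ0]
      · simp [hφ]
    -- Q side path
    have hkey2 : (⨅ b ∈ B, intrinsicDist Y' Q b) ≤ eVariationOn γ (Set.Icc t₂ 1) := by
      refine le_trans (iInf₂_le (γ t₂) hγt₂B) ?_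
      set φ : ℝ → ℝ := fun s => 1 - (1 - t₂) * s with hφ
      have himg : φ '' Set.Icc 0 1 = Set.Icc t₂ 1 := by
        rw [hφ]
        have h1 : (fun s : ℝ => 1 - (1 - t₂) * s) = (fun x => 1 - x) ∘ (fun s => (1 - t₂) * s) := rfl
        rw [h1, Set.image_comp]
        rw [show ((fun s : ℝ => (1 - t₂) * s) '' Set.Icc 0 1) = Set.Icc 0 (1 - t₂) by
          simpa using Set.image_mul_left_Icc (sub_nonneg.2 ht₂I.2) (zero_le_one (α := ℝ))]
        rw [Set.image_const_sub_Icc]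
        norm_num
      have hanti : AntitoneOn φ (Set.Icc 0 1) := by
        intro a _ b _ hab
        have : (1 - t₂) * a ≤ (1 - t₂) * b :=
          mul_le_mul_of_nonneg_left hab (sub_nonneg.2 ht₂I.2)
        simp only [hφ]; linarith
      have hvar : eVariationOn (γ ∘ φ) (Set.Icc 0 1) = eVariationOn γ (Set.Icc t₂ 1) := by
        rw [eVariationOn.comp_eq_of_antitoneOn γ φ hanti, himg]
      rw [← hvar]
      refine iInf₂_le (γ ∘ φ) ⟨?_, ?_, ?_, ?_⟩
      · have hc : Continuous φ := by fun_prop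
        have hm : Set.MapsTo φ (Set.Icc 0 1) (Set.Icc 0 1) := fun s hs =>
          (Set.Icc_subset_Icc_left ht₂I.1) (himg ▸ Set.mem_image_of_mem φ hs)
        exact hγc.comp hc.continuousOn hm
      · exact fun s hs => hmapsTo2 (himg ▸ Set.mem_image_of_mem φ hs)
      · simp [hφ, hγ1]
      · simp [hφ]
    -- assemble
    have hsplit : eVariationOn γ (Set.Icc 0 t₁) + eVariationOn γ (Set.Icc t₁ 1) =
        eVariationOn γ (Set.Icc 0 1) := by
      have := eVariationOn.Icc_add_Icc γ (s := Set.univ) ht₁I.1 ht₁I.2 (Set.mem_univ t₁)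
      simpa using this
    have hmono21 : eVariationOn γ (Set.Icc t₂ 1) ≤ eVariationOn γ (Set.Icc t₁ 1) :=
      eVariationOn.mono γ (Set.Icc_subset_Icc_left ht₁₂)
    calc intrinsicDist Y' P Q
        ≤ (⨅ b ∈ B, intrinsicDist Y' P b) + (⨅ b ∈ B, intrinsicDist Y' Q b) := hCT
      _ ≤ eVariationOn γ (Set.Icc 0 t₁) + eVariationOn γ (Set.Icc t₂ 1) :=
          add_le_add hkey1 hkey2
      _ ≤ eVariationOn γ (Set.Icc 0 t₁) + eVariationOn γ (Set.Icc t₁ 1) :=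
          add_le_add_right hmono21 _
      _ = eVariationOn γ (Set.Icc 0 1) := hsplit
end

section
/- Tweaked-graph characterization: let G = (V, E, ℓ) be a weighted graph with positive edge lengths, B ⊆ V a set of 'boundary' vertices, and G̃ the graph obtained from G by adding, for every pair b₁,b₂ ∈ B, an edge of length e(b₁,b₂) ≥ 0. Then for all u,v ∈ V, the shortest-path distance in G̃ equals min( d_G(u,v), min_{b₁,b₂∈B} [ d_G(u,b₁) + e(b₁,b₂) + d_G(b₂,v) ] ), provided e satisfies the triangle-type inequality e(b₁,b₃) ≤ d_G(b₁,b₂) + e(b₂,b₃) and e(b₁,b₄) ≤ e(b₁,b₂) + d_G(b₂,b₃) + e(b₃,b₄) for all boundary vertices (so that at most one added edge is used in a shortest path). -/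
open Set

/-- Cost of a chain of intermediate vertices: `chainCost c u [w₁,…,wₖ] v`
is `c u w₁ + c w₁ w₂ + ⋯ + c wₖ v`. -/
def chainCost {V : Type*} (c : V → V → ℝ) : V → List V → V → ℝ
  | u, [], v => c u v
  | u, w :: ws, v => c u w + chainCost c w ws v

/-- One-step cost in the tweaked graph `G̃`: between two boundary vertices one may also use
the added wormhole edge of length `e`. -/
noncomputable def tweakedStep {V : Type*} (dG : V → V → ℝ) (B : Set V) (e : V → V → ℝ) (u v : V) : ℝ :=
  open Classical in
  if u ∈ B ∧ v ∈ B then min (dG u v) (e u v) else dG u v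

/-- Shortest-path distance in the tweaked graph `G̃`, as the infimum of chain costs. -/
noncomputable def tweakedDist {V : Type*} (dG : V → V → ℝ) (B : Set V) (e : V → V → ℝ)
    (u v : V) : ℝ :=
  sInf {r : ℝ | ∃ l : List V, r = chainCost (tweakedStep dG B e) u l v}

private lemma tweakedStep_le_dG {V : Type*} (dG : V → V → ℝ) (B : Set V) (e : V → V → ℝ)
    (u v : V) : tweakedStep dG B e u v ≤ dG u v := by
  unfold tweakedStep
  split
  · exact min_le_left _ _
  · exact le_rfl

private lemma chain_lb {V : Type*} (dG : V → V → ℝ)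
    (hnonneg : ∀ u v, 0 ≤ dG u v) (hdiag : ∀ u, dG u u = 0)
    (htri : ∀ u v w, dG u w ≤ dG u v + dG v w)
    (B : Set V) (e : V → V → ℝ)
    (hetri₂ : ∀ b₁ ∈ B, ∀ b₂ ∈ B, ∀ b₃ ∈ B, ∀ b₄ ∈ B,
      e b₁ b₄ ≤ e b₁ b₂ + dG b₂ b₃ + e b₃ b₄)
    (v : V) :
    ∀ (l : List V) (u : V),
      dG u v ≤ chainCost (tweakedStep dG B e) u l v ∨
      ∃ b₁ ∈ B, ∃ b₂ ∈ B,
        dG u b₁ + e b₁ b₂ + dG b₂ v ≤ chainCost (tweakedStep dG B e) u l v := by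
  intro l
  induction l with
  | nil =>
    intro u
    show _ ∨ _
    simp only [chainCost]
    unfold tweakedStep
    split
    · rename_i h
      rcases min_cases (dG u v) (e u v) with ⟨heq, _⟩ | ⟨heq, _⟩
      · left; rw [heq]
      · right
        exact ⟨u, h.1, v, h.2, by rw [heq, hdiag, hdiag]; linarith⟩
    · left; exact le_rfl
  | cons w ws ih =>
    intro u
    simp only [chainCost]
    have step_dG : tweakedStep dG B e u w ≤ dG u w := tweakedStep_le_dG dG B e u w
    by_cases hmem : u ∈ B ∧ w ∈ B
    · have hstep : tweakedStep dG B e u w = min (dG u w) (e u w) := by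
        unfold tweakedStep; rw [if_pos hmem]
      rcases min_cases (dG u w) (e u w) with ⟨heq, _⟩ | ⟨heq, hle⟩
      · -- step = dG u w
        rcases ih w with h | ⟨b₁, hb₁, b₂, hb₂, h⟩
        · left
          calc dG u v ≤ dG u w + dG w v := htri u w v
          _ ≤ _ := by rw [hstep, heq]; linarith
        · right
          refine ⟨b₁, hb₁, b₂, hb₂, ?_⟩
          have : dG u b₁ ≤ dG u w + dG w b₁ := htri u w b₁
          rw [hstep, heq]; linarith
      · -- step = e u w with u, w ∈ B
        rcases ih w with h | ⟨b₁, hb₁, b₂, hb₂, h⟩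
        · right
          refine ⟨u, hmem.1, w, hmem.2, ?_⟩
          rw [hstep, heq, hdiag]; linarith
        · right
          refine ⟨u, hmem.1, b₂, hb₂, ?_⟩
          have := hetri₂ u hmem.1 w hmem.2 b₁ hb₁ b₂ hb₂
          rw [hstep, heq, hdiag]; linarith
    · have hstep : tweakedStep dG B e u w = dG u w := by
        unfold tweakedStep; rw [if_neg hmem]
      rcases ih w with h | ⟨b₁, hb₁, b₂, hb₂, h⟩
      · left
        have := htri u w v
        rw [hstep]; linarith
      · right
        refine ⟨b₁, hb₁, b₂, hb₂, ?_⟩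
        have := htri u w b₁
        rw [hstep]; linarith

/-- tweaked-graph characterization. If `dG` is the shortest-path distance of a
weighted graph (nonnegative, zero on the diagonal, symmetric, triangle inequality) and the
wormhole weights `e` on the boundary `B` are nonnegative, symmetric, bounded by `dG`, and
satisfy the triangle-type inequalities, then the distance in the tweaked graph equals
`min(dG u v, min_{b₁,b₂∈B} [dG u b₁ + e b₁ b₂ + dG b₂ v])`. -/
theorem tweaked_graph_dist {V : Type*} (dG : V → V → ℝ)
    (hnonneg : ∀ u v, 0 ≤ dG u v) (hdiag : ∀ u, dG u u = 0)
    (hsymm : ∀ u v, dG u v = dG v u)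
    (htri : ∀ u v w, dG u w ≤ dG u v + dG v w)
    (B : Set V) (hBne : B.Nonempty)
    (e : V → V → ℝ) (he0 : ∀ b₁ b₂, 0 ≤ e b₁ b₂) (hesymm : ∀ b₁ b₂, e b₁ b₂ = e b₂ b₁)
    (heled : ∀ b₁ ∈ B, ∀ b₂ ∈ B, e b₁ b₂ ≤ dG b₁ b₂)
    (hetri₁ : ∀ b₁ ∈ B, ∀ b₂ ∈ B, ∀ b₃ ∈ B, e b₁ b₃ ≤ dG b₁ b₂ + e b₂ b₃)
    (hetri₂ : ∀ b₁ ∈ B, ∀ b₂ ∈ B, ∀ b₃ ∈ B, ∀ b₄ ∈ B,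
      e b₁ b₄ ≤ e b₁ b₂ + dG b₂ b₃ + e b₃ b₄)
    (u v : V) :
    tweakedDist dG B e u v =
      min (dG u v)
        (sInf {r : ℝ | ∃ b₁ ∈ B, ∃ b₂ ∈ B, r = dG u b₁ + e b₁ b₂ + dG b₂ v}) := by
  set Kset := {r : ℝ | ∃ b₁ ∈ B, ∃ b₂ ∈ B, r = dG u b₁ + e b₁ b₂ + dG b₂ v} with hKset
  set Cset := {r : ℝ | ∃ l : List V, r = chainCost (tweakedStep dG B e) u l v} with hCset
  obtain ⟨b, hb⟩ := hBne
  have hKne : Kset.Nonempty := ⟨_, b, hb, b, hb, rfl⟩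
  have hKbdd : BddBelow Kset := by
    refine ⟨0, fun r hr => ?_⟩
    obtain ⟨b₁, _, b₂, _, rfl⟩ := hr
    have := hnonneg u b₁; have := he0 b₁ b₂; have := hnonneg b₂ v; linarith
  have hK0 : 0 ≤ sInf Kset := le_csInf hKne (fun r hr => by
    obtain ⟨b₁, _, b₂, _, rfl⟩ := hr
    have := hnonneg u b₁; have := he0 b₁ b₂; have := hnonneg b₂ v; linarith)
  have hlb := chain_lb dG hnonneg hdiag htri B e hetri₂ v
  -- every chain cost is at least the RHS min
  have hCbdd : ∀ r ∈ Cset, min (dG u v) (sInf Kset) ≤ r := by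
    rintro r ⟨l, rfl⟩
    rcases hlb l u with h | ⟨b₁, hb₁, b₂, hb₂, h⟩
    · exact le_trans (min_le_left _ _) h
    · refine le_trans (min_le_right _ _) (le_trans ?_ h)
      exact csInf_le hKbdd ⟨b₁, hb₁, b₂, hb₂, rfl⟩
  have hCne : Cset.Nonempty := ⟨_, [], rfl⟩
  have hCbdd' : BddBelow Cset := ⟨_, hCbdd⟩
  apply le_antisymm
  · -- tweakedDist ≤ min
    apply le_min
    · calc sInf Cset ≤ chainCost (tweakedStep dG B e) u [] v := csInf_le hCbdd' ⟨[], rfl⟩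
        _ = tweakedStep dG B e u v := rfl
        _ ≤ dG u v := tweakedStep_le_dG _ _ _ _ _
    · refine le_csInf hKne ?_
      rintro r ⟨b₁, hb₁, b₂, hb₂, rfl⟩
      have h1 : tweakedStep dG B e u b₁ ≤ dG u b₁ := tweakedStep_le_dG _ _ _ _ _
      have h2 : tweakedStep dG B e b₁ b₂ ≤ e b₁ b₂ := by
        unfold tweakedStep; rw [if_pos ⟨hb₁, hb₂⟩]; exact min_le_right _ _
      have h3 : tweakedStep dG B e b₂ v ≤ dG b₂ v := tweakedStep_le_dG _ _ _ _ _
      calc sInf Cset ≤ chainCost (tweakedStep dG B e) u [b₁, b₂] v :=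
            csInf_le hCbdd' ⟨[b₁, b₂], rfl⟩
        _ = tweakedStep dG B e u b₁ + (tweakedStep dG B e b₁ b₂ + tweakedStep dG B e b₂ v) := rfl
        _ ≤ dG u b₁ + e b₁ b₂ + dG b₂ v := by linarith
  · exact le_csInf hCne hCbdd
end
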